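/- Let α > 0 be a real constant, let f : ℝ×ℝ → ℝ be smooth with f_t = −4 f_{xxx} everywhere, and let c₀, d₀ be real constants. Define c(t) = e^{−4α√α t}[ c₀ − 2∫₀^t e^{4α√α t'} ( (1/√α) f_{xx} + f_x + √α f )(0,t') dt' ], d(t) = e^{4α√α t}[ d₀ + 2∫₀^t e^{−4α√α t'} ( −(1/√α) f_{xx} + f_x − √α f )(0,t') dt' ], and φ(x,t) = [ (1/(2√α)) ∫₀^x f(x',t) e^{−√α x'} dx' + c(t) ] e^{√α x} − [ (1/(2√α)) ∫₀^x f(x',t) e^{√α x'} dx' + d(t) ] e^{−√α x}. Then φ satisfies φ_{xx} = α φ + f and φ_t = −4 φ_{xxx} everywhere. -/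

import Mathlib

/-- Partial derivative with respect to the first variable `x`. -/
noncomputable def px (f : ℝ × ℝ → ℝ) : ℝ × ℝ → ℝ :=
  fun p => deriv (fun x => f (x, p.2)) p.1

/-- Partial derivative with respect to the second variable `t`. -/
noncomputable def pt (f : ℝ × ℝ → ℝ) : ℝ × ℝ → ℝ :=
  fun p => deriv (fun t => f (p.1, t)) p.2

open Real intervalIntegral Set MeasureTheory

lemma slice_x_contDiff {f : ℝ × ℝ → ℝ} (hf : ContDiff ℝ (⊤ : ℕ∞) f) (t : ℝ) :
    ContDiff ℝ (⊤ : ℕ∞) (fun x : ℝ => f (x, t)) :=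
  hf.comp ((contDiff_id.prodMk contDiff_const))

lemma slice_t_contDiff {f : ℝ × ℝ → ℝ} (hf : ContDiff ℝ (⊤ : ℕ∞) f) (x : ℝ) :
    ContDiff ℝ (⊤ : ℕ∞) (fun t : ℝ => f (x, t)) :=
  hf.comp ((contDiff_const.prodMk contDiff_id))

lemma hasDerivAt_px {f : ℝ × ℝ → ℝ} (hf : ContDiff ℝ (⊤ : ℕ∞) f) (p : ℝ × ℝ) :
    HasDerivAt (fun x => f (x, p.2)) (px f p) p.1 :=
  (((slice_x_contDiff hf p.2).differentiable (by simp)) p.1).hasDerivAt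

lemma hasDerivAt_pt {f : ℝ × ℝ → ℝ} (hf : ContDiff ℝ (⊤ : ℕ∞) f) (p : ℝ × ℝ) :
    HasDerivAt (fun t => f (p.1, t)) (pt f p) p.2 :=
  (((slice_t_contDiff hf p.1).differentiable (by simp)) p.2).hasDerivAt

lemma px_eq_fderiv {f : ℝ × ℝ → ℝ} (hf : ContDiff ℝ (⊤ : ℕ∞) f) :
    px f = fun p => fderiv ℝ f p (1, 0) := by
  funext p
  have h1 : HasFDerivAt (fun x : ℝ => (x, p.2)) ((ContinuousLinearMap.inl ℝ ℝ ℝ)) p.1 := by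
    have h := ((ContinuousLinearMap.inl ℝ ℝ ℝ).hasFDerivAt (x := p.1)).add_const ((0:ℝ), p.2)
    exact h.congr_of_eventuallyEq (by filter_upwards with x; simp [Prod.ext_iff])
  have h2 : HasFDerivAt f (fderiv ℝ f (p.1, p.2)) (p.1, p.2) :=
    (hf.differentiable (by simp) (p.1, p.2)).hasFDerivAt
  have h3 : HasDerivAt (fun x : ℝ => f (x, p.2)) (fderiv ℝ f (p.1, p.2) (1, 0)) p.1 := by
    have := (h2.comp p.1 h1).hasDerivAt
    exact this
  simpa [px] using h3.deriv

lemma pt_eq_fderiv {f : ℝ × ℝ → ℝ} (hf : ContDiff ℝ (⊤ : ℕ∞) f) :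
    pt f = fun p => fderiv ℝ f p (0, 1) := by
  funext p
  have h1 : HasFDerivAt (fun t : ℝ => (p.1, t)) ((ContinuousLinearMap.inr ℝ ℝ ℝ)) p.2 := by
    have h := ((ContinuousLinearMap.inr ℝ ℝ ℝ).hasFDerivAt (x := p.2)).add_const ((p.1:ℝ), 0)
    exact h.congr_of_eventuallyEq (by filter_upwards with x; simp [Prod.ext_iff])
  have h2 : HasFDerivAt f (fderiv ℝ f (p.1, p.2)) (p.1, p.2) :=
    (hf.differentiable (by simp) (p.1, p.2)).hasFDerivAt
  have h3 : HasDerivAt (fun t : ℝ => f (p.1, t)) (fderiv ℝ f (p.1, p.2) (0, 1)) p.2 := by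
    have := (h2.comp p.2 h1).hasDerivAt
    exact this
  simpa [pt] using h3.deriv

lemma contDiff_px {f : ℝ × ℝ → ℝ} (hf : ContDiff ℝ (⊤ : ℕ∞) f) : ContDiff ℝ (⊤ : ℕ∞) (px f) := by
  rw [px_eq_fderiv hf]
  exact (hf.fderiv_right (by simp)).clm_apply contDiff_const

lemma contDiff_pt {f : ℝ × ℝ → ℝ} (hf : ContDiff ℝ (⊤ : ℕ∞) f) : ContDiff ℝ (⊤ : ℕ∞) (pt f) := by
  rw [pt_eq_fderiv hf]
  exact (hf.fderiv_right (by simp)).clm_apply contDiff_const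

lemma contDiff_px_iter {f : ℝ × ℝ → ℝ} (hf : ContDiff ℝ (⊤ : ℕ∞) f) (n : ℕ) :
    ContDiff ℝ (⊤ : ℕ∞) (px^[n] f) := by
  induction n with
  | zero => exact hf
  | succ k ih => rw [Function.iterate_succ_apply']; exact contDiff_px ih

lemma hasDerivAt_param_integral {g : ℝ × ℝ → ℝ} (hg : ContDiff ℝ (⊤ : ℕ∞) g)
    {w : ℝ → ℝ} (hw : Continuous w) (x t : ℝ) :
    HasDerivAt (fun τ => ∫ x' in (0:ℝ)..x, g (x', τ) * w x')
      (∫ x' in (0:ℝ)..x, pt g (x', t) * w x') t := by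
  have hgc : Continuous g := hg.continuous
  have hptc : Continuous (pt g) := (contDiff_pt hg).continuous
  have hcont : ∀ τ : ℝ, Continuous fun x' => g (x', τ) * w x' := fun τ =>
    (hgc.comp (continuous_id.prodMk continuous_const)).mul hw
  have hcont' : ∀ τ : ℝ, Continuous fun x' => pt g (x', τ) * w x' := fun τ =>
    (hptc.comp (continuous_id.prodMk continuous_const)).mul hw
  -- bound on compact set
  obtain ⟨M, hM⟩ : ∃ M, ∀ q ∈ (uIcc 0 x) ×ˢ (Icc (t - 1) (t + 1)),
      ‖pt g q * w q.1‖ ≤ M :=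
    (isCompact_uIcc.prod isCompact_Icc).exists_bound_of_continuousOn
      ((hptc.mul (hw.comp continuous_fst)).continuousOn)
  have := (intervalIntegral.hasDerivAt_integral_of_dominated_loc_of_deriv_le
    (F := fun τ x' => g (x', τ) * w x') (F' := fun τ x' => pt g (x', τ) * w x')
    (x₀ := t) (a := 0) (b := x) (bound := fun _ => M) (s := Metric.ball t 1) (μ := MeasureTheory.volume) (Metric.ball_mem_nhds t one_pos)
    (Filter.Eventually.of_forall fun τ => ((hcont τ).aestronglyMeasurable))
    ((hcont t).intervalIntegrable _ _)
    ((hcont' t).aestronglyMeasurable)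
    (Filter.Eventually.of_forall fun x' hx' τ hτ => by
      have h1 : x' ∈ uIcc 0 x := uIoc_subset_uIcc hx'
      have h2 : τ ∈ Icc (t - 1) (t + 1) := by
        rw [Metric.mem_ball, Real.dist_eq] at hτ
        constructor <;> [linarith [abs_lt.mp hτ |>.1]; linarith [abs_lt.mp hτ |>.2]]
      exact hM (x', τ) (Set.mk_mem_prod h1 h2))
    (intervalIntegrable_const)
    (Filter.Eventually.of_forall fun x' _ τ _ =>
      (hasDerivAt_pt hg (x', τ)).mul_const (w x')))
  exact this.2

lemma ibp_exp {u u' : ℝ → ℝ} (hu : ∀ y, HasDerivAt u (u' y) y)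
    (hu'c : Continuous u') (σ x : ℝ) :
    ∫ y in (0:ℝ)..x, u' y * Real.exp (σ * y)
      = u x * Real.exp (σ * x) - u 0 - σ * ∫ y in (0:ℝ)..x, u y * Real.exp (σ * y) := by
  have huc : Continuous u := by
    have : Differentiable ℝ u := fun y => (hu y).differentiableAt
    exact this.continuous
  have hec : Continuous fun y : ℝ => Real.exp (σ * y) :=
    Real.continuous_exp.comp (continuous_const.mul continuous_id)
  have hv : ∀ y : ℝ, HasDerivAt (fun y => Real.exp (σ * y)) (Real.exp (σ * y) * σ) y :=
    fun y => by simpa using ((hasDerivAt_id y).const_mul σ).exp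
  have key := intervalIntegral.integral_deriv_mul_eq_sub_of_hasDerivAt
    (u := u) (v := fun y => Real.exp (σ * y)) (u' := u') (v' := fun y => Real.exp (σ * y) * σ)
    (a := 0) (b := x)
    huc.continuousOn hec.continuousOn (fun y _ => hu y) (fun y _ => hv y)
    (hu'c.intervalIntegrable _ _) ((hec.mul continuous_const).intervalIntegrable _ _)
  have hsplit : ∫ y in (0:ℝ)..x, (u' y * Real.exp (σ * y) + u y * (Real.exp (σ * y) * σ))
      = (∫ y in (0:ℝ)..x, u' y * Real.exp (σ * y))
        + ∫ y in (0:ℝ)..x, u y * (Real.exp (σ * y) * σ) :=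
    intervalIntegral.integral_add ((hu'c.mul hec).intervalIntegrable _ _)
      ((huc.mul (hec.mul continuous_const)).intervalIntegrable _ _)
  have hpull : ∫ y in (0:ℝ)..x, u y * (Real.exp (σ * y) * σ)
      = σ * ∫ y in (0:ℝ)..x, u y * Real.exp (σ * y) := by
    rw [← intervalIntegral.integral_const_mul]
    exact intervalIntegral.integral_congr fun y _ => by ring
  rw [hsplit, hpull] at key
  simp only [mul_zero, Real.exp_zero, mul_one] at key
  linarith

lemma ftc_cont {g : ℝ → ℝ} (hg : Continuous g) (t : ℝ) :
    HasDerivAt (fun τ => ∫ u in (0:ℝ)..τ, g u) (g t) t :=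
  intervalIntegral.integral_hasDerivAt_right (hg.intervalIntegrable _ _)
    hg.aestronglyMeasurable.stronglyMeasurableAtFilter hg.continuousAt

lemma integral_pxsucc {g : ℝ × ℝ → ℝ} (hg : ContDiff ℝ (⊤ : ℕ∞) g) (σ x t : ℝ) :
    ∫ y in (0:ℝ)..x, px g (y, t) * Real.exp (σ * y)
      = g (x, t) * Real.exp (σ * x) - g (0, t)
        - σ * ∫ y in (0:ℝ)..x, g (y, t) * Real.exp (σ * y) :=
  ibp_exp (u := fun y => g (y, t)) (u' := fun y => px g (y, t))
    (fun y => hasDerivAt_px hg (y, t))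
    ((contDiff_px hg).continuous.comp (continuous_id.prodMk continuous_const)) σ x




/-- Negative eigenvalue case: the stated variation-of-parameters formulas give a solution of
`φ_{xx} = αφ + f`, `φ_t = −4φ_{xxx}` for `α > 0`. -/
theorem negative_eigenvalue_solution
    (α : ℝ) (hα : 0 < α)
    (f : ℝ × ℝ → ℝ) (hf : ContDiff ℝ (⊤ : ℕ∞) f)
    (hcomp : ∀ p : ℝ × ℝ, pt f p = -4 * (px^[3] f) p)
    (c₀ d₀ : ℝ) (c d : ℝ → ℝ) (φ : ℝ × ℝ → ℝ)
    (hc : ∀ t : ℝ, c t = Real.exp (-4 * α * Real.sqrt α * t) *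
      (c₀ - 2 * ∫ t' in (0:ℝ)..t, Real.exp (4 * α * Real.sqrt α * t') *
        ((1 / Real.sqrt α) * (px^[2] f) (0, t') + px f (0, t')
          + Real.sqrt α * f (0, t'))))
    (hd : ∀ t : ℝ, d t = Real.exp (4 * α * Real.sqrt α * t) *
      (d₀ + 2 * ∫ t' in (0:ℝ)..t, Real.exp (-4 * α * Real.sqrt α * t') *
        (-(1 / Real.sqrt α) * (px^[2] f) (0, t') + px f (0, t')
          - Real.sqrt α * f (0, t'))))
    (hφ : ∀ x t : ℝ,
      φ (x, t) = ((1 / (2 * Real.sqrt α)) *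
            (∫ x' in (0:ℝ)..x, f (x', t) * Real.exp (-(Real.sqrt α) * x')) + c t) *
          Real.exp (Real.sqrt α * x)
        - ((1 / (2 * Real.sqrt α)) *
            (∫ x' in (0:ℝ)..x, f (x', t) * Real.exp (Real.sqrt α * x')) + d t) *
          Real.exp (-(Real.sqrt α) * x)) :
    (∀ p : ℝ × ℝ, (px^[2] φ) p = α * φ p + f p) ∧
    (∀ p : ℝ × ℝ, pt φ p = -4 * (px^[3] φ) p) := by
  have hs0 : 0 < Real.sqrt α := Real.sqrt_pos.mpr hα
  set s := Real.sqrt α with hsdef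
  have hsne : s ≠ 0 := ne_of_gt hs0
  have hs2 : s ^ 2 = α := Real.sq_sqrt hα.le
  have hexpc : ∀ σ : ℝ, Continuous fun y : ℝ => Real.exp (σ * y) := fun σ =>
    Real.continuous_exp.comp (continuous_const.mul continuous_id)
  have hfc : ∀ t : ℝ, Continuous fun y : ℝ => f (y, t) := fun t =>
    hf.continuous.comp (continuous_id.prodMk continuous_const)
  -- FTC in x for the two integrals
  have hAx : ∀ (σ x t : ℝ), HasDerivAt
      (fun y => ∫ x' in (0:ℝ)..y, f (x', t) * Real.exp (σ * x'))
      (f (x, t) * Real.exp (σ * x)) x := fun σ x t =>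
    ftc_cont ((hfc t).mul (hexpc σ)) x
  -- first x-derivative of φ
  have hφx : ∀ x t : ℝ, HasDerivAt (fun y => φ (y, t))
      (s * (((1 / (2 * s)) *
          (∫ x' in (0:ℝ)..x, f (x', t) * Real.exp (-s * x')) + c t) * Real.exp (s * x)
        + ((1 / (2 * s)) *
          (∫ x' in (0:ℝ)..x, f (x', t) * Real.exp (s * x')) + d t) * Real.exp (-s * x))) x := by
    intro x t
    have hE : HasDerivAt (fun y : ℝ => Real.exp (s * y)) (Real.exp (s * x) * s) x := by
      simpa using ((hasDerivAt_id x).const_mul s).exp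
    have hE' : HasDerivAt (fun y : ℝ => Real.exp (-s * y)) (Real.exp (-s * x) * (-s)) x := by
      simpa using ((hasDerivAt_id x).const_mul (-s)).exp
    have hP := ((hAx (-s) x t).const_mul (1 / (2 * s))).add_const (c t)
    have hQ := ((hAx s x t).const_mul (1 / (2 * s))).add_const (d t)
    have h1 := (hP.mul hE).sub (hQ.mul hE')
    have h2 := h1.congr_of_eventuallyEq (Filter.Eventually.of_forall fun y => hφ y t)
    convert h2 using 1
    · rfl
    · rfl
    ring
  have hpxφ : ∀ x t : ℝ, px φ (x, t) =
      s * (((1 / (2 * s)) *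
          (∫ x' in (0:ℝ)..x, f (x', t) * Real.exp (-s * x')) + c t) * Real.exp (s * x)
        + ((1 / (2 * s)) *
          (∫ x' in (0:ℝ)..x, f (x', t) * Real.exp (s * x')) + d t) * Real.exp (-s * x)) := by
    intro x t
    exact (hφx x t).deriv
  -- second x-derivative of φ
  have hφxx : ∀ x t : ℝ, HasDerivAt (fun y => px φ (y, t)) (α * φ (x, t) + f (x, t)) x := by
    intro x t
    have hE : HasDerivAt (fun y : ℝ => Real.exp (s * y)) (Real.exp (s * x) * s) x := by
      simpa using ((hasDerivAt_id x).const_mul s).exp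
    have hE' : HasDerivAt (fun y : ℝ => Real.exp (-s * y)) (Real.exp (-s * x) * (-s)) x := by
      simpa using ((hasDerivAt_id x).const_mul (-s)).exp
    have hP := ((hAx (-s) x t).const_mul (1 / (2 * s))).add_const (c t)
    have hQ := ((hAx s x t).const_mul (1 / (2 * s))).add_const (d t)
    have h1 := ((hP.mul hE).add (hQ.mul hE')).const_mul s
    have h2 := h1.congr_of_eventuallyEq (Filter.Eventually.of_forall fun y => hpxφ y t)
    convert h2 using 1
    · rfl
    · rfl
    rw [hφ x t, ← hs2]
    have hEneg : Real.exp (-s * x) = (Real.exp (s * x))⁻¹ := by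
      rw [neg_mul, Real.exp_neg]
    rw [hEneg]
    field_simp
    ring
  have part1 : ∀ p : ℝ × ℝ, (px^[2] φ) p = α * φ p + f p := by
    rintro ⟨x, t⟩
    have h0 : (px^[2] φ) (x, t) = deriv (fun y => px φ (y, t)) x := rfl
    rw [h0, (hφxx x t).deriv]
  -- third x-derivative of φ
  have hpx3 : ∀ x t : ℝ, (px^[3] φ) (x, t) = α * px φ (x, t) + px f (x, t) := by
    intro x t
    have i3 : px^[3] φ = px (px^[2] φ) := Function.iterate_succ_apply' px 2 φ
    have h0 : px (px^[2] φ) (x, t) = deriv (fun y => (px^[2] φ) (y, t)) x := rfl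
    have hD := ((hφx x t).const_mul α).add (hasDerivAt_px hf (x, t))
    have hD2 := hD.congr_of_eventuallyEq
      (Filter.Eventually.of_forall fun y => (part1 (y, t)))
    rw [i3, h0, hD2.deriv, ← hpxφ x t]
  -- closed form for ∫ pt f
  have j2 : px^[2] f = px (px f) := by
    rw [Function.iterate_succ_apply', Function.iterate_one]
  have hptI : ∀ (σ x t : ℝ), (∫ x' in (0:ℝ)..x, pt f (x', t) * Real.exp (σ * x'))
      = -4 * ((px^[2] f) (x, t) * Real.exp (σ * x) - (px^[2] f) (0, t)
        - σ * (px f (x, t) * Real.exp (σ * x) - px f (0, t)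
        - σ * (f (x, t) * Real.exp (σ * x) - f (0, t)
        - σ * ∫ x' in (0:ℝ)..x, f (x', t) * Real.exp (σ * x')))) := by
    intro σ x t
    have e1 := integral_pxsucc (contDiff_px_iter hf 2) σ x t
    have e2 := integral_pxsucc (contDiff_px hf) σ x t
    have e3 := integral_pxsucc hf σ x t
    have step1 : (∫ x' in (0:ℝ)..x, pt f (x', t) * Real.exp (σ * x'))
        = ∫ x' in (0:ℝ)..x, (-4 : ℝ) * (px (px^[2] f) (x', t) * Real.exp (σ * x')) := by
      refine intervalIntegral.integral_congr fun y _ => ?_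
      rw [hcomp (y, t), Function.iterate_succ_apply']
      ring
    rw [step1, intervalIntegral.integral_const_mul, e1, j2, e2, e3]
  -- derivative of c
  have hct : ∀ t : ℝ, HasDerivAt c
      (-(4 * α * s) * (Real.exp (-4 * α * s * t) *
        (c₀ - 2 * ∫ t' in (0:ℝ)..t, Real.exp (4 * α * s * t') *
          ((1 / s) * (px^[2] f) (0, t') + px f (0, t') + s * f (0, t'))))
        - 2 * ((1 / s) * (px^[2] f) (0, t) + px f (0, t) + s * f (0, t))) t := by
    intro t
    have hGc : Continuous fun t' : ℝ => Real.exp (4 * α * s * t') *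
        ((1 / s) * (px^[2] f) (0, t') + px f (0, t') + s * f (0, t')) := by
      have h1 : Continuous fun t' : ℝ => (px^[2] f) (0, t') :=
        (contDiff_px_iter hf 2).continuous.comp (continuous_const.prodMk continuous_id)
      have h2 : Continuous fun t' : ℝ => px f (0, t') :=
        (contDiff_px hf).continuous.comp (continuous_const.prodMk continuous_id)
      have h3 : Continuous fun t' : ℝ => f (0, t') :=
        hf.continuous.comp (continuous_const.prodMk continuous_id)
      exact (hexpc _).mul (((continuous_const.mul h1).add h2).add (continuous_const.mul h3))
    have hInt := ftc_cont hGc t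
    have hE : HasDerivAt (fun t : ℝ => Real.exp (-4 * α * s * t))
        (Real.exp (-4 * α * s * t) * (-4 * α * s)) t := by
      simpa using ((hasDerivAt_id t).const_mul (-4 * α * s)).exp
    have h1 := hE.mul ((hInt.const_mul 2).const_sub c₀)
    have h2 := h1.congr_of_eventuallyEq (Filter.Eventually.of_forall fun τ => hc τ)
    convert h2 using 1
    · rfl
    · rfl
    have hEneg : Real.exp (-4 * α * s * t) = (Real.exp (4 * α * s * t))⁻¹ := by
      rw [show (-4 * α * s * t : ℝ) = -(4 * α * s * t) by ring, Real.exp_neg]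
    rw [hEneg]
    field_simp
    ring
  -- derivative of d
  have hdt : ∀ t : ℝ, HasDerivAt d
      ((4 * α * s) * (Real.exp (4 * α * s * t) *
        (d₀ + 2 * ∫ t' in (0:ℝ)..t, Real.exp (-4 * α * s * t') *
          (-(1 / s) * (px^[2] f) (0, t') + px f (0, t') - s * f (0, t'))))
        + 2 * (-(1 / s) * (px^[2] f) (0, t) + px f (0, t) - s * f (0, t))) t := by
    intro t
    have hGc : Continuous fun t' : ℝ => Real.exp (-4 * α * s * t') *
        (-(1 / s) * (px^[2] f) (0, t') + px f (0, t') - s * f (0, t')) := by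
      have h1 : Continuous fun t' : ℝ => (px^[2] f) (0, t') :=
        (contDiff_px_iter hf 2).continuous.comp (continuous_const.prodMk continuous_id)
      have h2 : Continuous fun t' : ℝ => px f (0, t') :=
        (contDiff_px hf).continuous.comp (continuous_const.prodMk continuous_id)
      have h3 : Continuous fun t' : ℝ => f (0, t') :=
        hf.continuous.comp (continuous_const.prodMk continuous_id)
      exact (hexpc _).mul (((continuous_const.mul h1).add h2).sub (continuous_const.mul h3))
    have hInt := ftc_cont hGc t
    have hE : HasDerivAt (fun t : ℝ => Real.exp (4 * α * s * t))
        (Real.exp (4 * α * s * t) * (4 * α * s)) t := by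
      simpa using ((hasDerivAt_id t).const_mul (4 * α * s)).exp
    have h1 := hE.mul ((hInt.const_mul 2).const_add d₀)
    have h2 := h1.congr_of_eventuallyEq (Filter.Eventually.of_forall fun τ => hd τ)
    convert h2 using 1
    · rfl
    · rfl
    have hEneg : Real.exp (-4 * α * s * t) = (Real.exp (4 * α * s * t))⁻¹ := by
      rw [show (-4 * α * s * t : ℝ) = -(4 * α * s * t) by ring, Real.exp_neg]
    rw [hEneg]
    field_simp
  -- t-derivative of φ
  have hφt : ∀ x t : ℝ, HasDerivAt (fun τ => φ (x, τ))
      (((1 / (2 * s)) * (∫ x' in (0:ℝ)..x, pt f (x', t) * Real.exp (-s * x'))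
          + (-(4 * α * s) * (Real.exp (-4 * α * s * t) *
            (c₀ - 2 * ∫ t' in (0:ℝ)..t, Real.exp (4 * α * s * t') *
              ((1 / s) * (px^[2] f) (0, t') + px f (0, t') + s * f (0, t'))))
            - 2 * ((1 / s) * (px^[2] f) (0, t) + px f (0, t) + s * f (0, t))))
          * Real.exp (s * x)
        - ((1 / (2 * s)) * (∫ x' in (0:ℝ)..x, pt f (x', t) * Real.exp (s * x'))
          + ((4 * α * s) * (Real.exp (4 * α * s * t) *
            (d₀ + 2 * ∫ t' in (0:ℝ)..t, Real.exp (-4 * α * s * t') *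
              (-(1 / s) * (px^[2] f) (0, t') + px f (0, t') - s * f (0, t'))))
            + 2 * (-(1 / s) * (px^[2] f) (0, t) + px f (0, t) - s * f (0, t))))
          * Real.exp (-s * x)) t := by
    intro x t
    have hA : HasDerivAt (fun τ => ∫ x' in (0:ℝ)..x, f (x', τ) * Real.exp (-s * x'))
        (∫ x' in (0:ℝ)..x, pt f (x', t) * Real.exp (-s * x')) t :=
      hasDerivAt_param_integral hf (hexpc (-s)) x t
    have hB : HasDerivAt (fun τ => ∫ x' in (0:ℝ)..x, f (x', τ) * Real.exp (s * x'))
        (∫ x' in (0:ℝ)..x, pt f (x', t) * Real.exp (s * x')) t :=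
      hasDerivAt_param_integral hf (hexpc s) x t
    have h1 := (((hA.const_mul (1 / (2 * s))).add (hct t)).mul_const (Real.exp (s * x))).sub
      (((hB.const_mul (1 / (2 * s))).add (hdt t)).mul_const (Real.exp (-s * x)))
    exact h1.congr_of_eventuallyEq (Filter.Eventually.of_forall fun τ => hφ x τ)
  refine ⟨part1, ?_⟩
  rintro ⟨x, t⟩
  have hptφ : pt φ (x, t) = _ := (hφt x t).deriv
  rw [hptφ, hpx3 x t, hpxφ x t, hptI (-s) x t, hptI s x t, hc t, hd t, ← hs2]
  have hEneg1 : Real.exp (-s * x) = (Real.exp (s * x))⁻¹ := by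
    rw [neg_mul, Real.exp_neg]
  have hEneg2 : Real.exp (-4 * s ^ 2 * s * t) = (Real.exp (4 * s ^ 2 * s * t))⁻¹ := by
    rw [show (-4 * s ^ 2 * s * t : ℝ) = -(4 * s ^ 2 * s * t) by ring, Real.exp_neg]
  rw [hEneg1, hEneg2]
  field_simp
  ring
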